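/- arXiv:1504.01842 — 2 statements merged into one kernel-verified Lean document; each statement's English description precedes it below -/
import Mathlib

section
/- Side-effect safety of typable sequential DEX steps: if a DEX execution step ⟨i, ρ, h⟩ ⇝ ⟨i', ρ', h'⟩ is taken by an instruction other than invoke, and the instruction is typable at program point i with method heap-effect level k_h (in particular, for iput the constraint k_h ≤ ft(f) holds, and object/array allocations use fresh locations), then h ≼_{k_h} h'. -/
/-- Heaps are partial maps from locations to objects (field maps; array
cells are treated analogously to fields). -/
abbrev Heap (L F V : Type*) := L → Option (F → V)

/-- Side-effect preorder `h ≼_k h'`. -/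
def SEPre {L F V Sec : Type*} [Lattice Sec] (ft : F → Sec) (k : Sec)
    (h h' : Heap L F V) : Prop :=
  (∀ l, (h l).isSome → (h' l).isSome) ∧
  (∀ l o o', h l = some o → h' l = some o' → ∀ f, ¬ k ≤ ft f → o f = o' f)

/-- DEX instructions (heap-relevant fragment). -/
inductive Instr (F : Type*) where
  | const | move | goto | ifeq | binop | iget
  | new | newarray
  | iput (f : F) | aput (f : F)
  | invoke

/-- The effect of an instruction on the heap according to the DEX
operational semantics: const/move/goto/ifeq/binop/iget leave the heap
unchanged; new/newarray extend the heap at a fresh location; iput/aput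
update a field (resp. array cell) of an existing location. -/
def HeapEffect {L F V : Type*} [DecidableEq L] [DecidableEq F] :
    Instr F → Heap L F V → Heap L F V → Prop
  | .const, h, h' => h' = h
  | .move, h, h' => h' = h
  | .goto, h, h' => h' = h
  | .ifeq, h, h' => h' = h
  | .binop, h, h' => h' = h
  | .iget, h, h' => h' = h
  | .new, h, h' => ∃ l o, h l = none ∧ h' = Function.update h l (some o)
  | .newarray, h, h' => ∃ l o, h l = none ∧ h' = Function.update h l (some o)
  | .iput f, h, h' => ∃ l o v, h l = some o ∧
      h' = Function.update h l (some (Function.update o f v))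
  | .aput f, h, h' => ∃ l o v, h l = some o ∧
      h' = Function.update h l (some (Function.update o f v))
  | .invoke, _, _ => True

/-- The typing constraint on the heap-effect level `k_h`: for iput (and
analogously aput) the rule requires `k_h ≤ ft f`. -/
def TypableConstraint {F Sec : Type*} [Lattice Sec] (ft : F → Sec) (kh : Sec) :
    Instr F → Prop
  | .iput f => kh ≤ ft f
  | .aput f => kh ≤ ft f
  | _ => True

theorem isSome_update_some_of_isSome {α β : Type*} [DecidableEq α] {g : α → Option β} {x : α}
    (hx : (g x).isSome) (l : α) (b : β) : (Function.update g l (some b) x).isSome := by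
  rcases eq_or_ne x l with rfl | hxl
  · simp
  · rwa [Function.update_of_ne hxl]

namespace SEPre

variable {L F V Sec : Type*} [Lattice Sec] (ft : F → Sec) (k : Sec)

theorem refl (h : Heap L F V) : SEPre ft k h h :=
  ⟨fun _ hl => hl, fun _ _ _ ho ho' _ _ => congrFun (Option.some.inj (ho.symm.trans ho')) _⟩

theorem update_fresh [DecidableEq L] {h : Heap L F V} {l : L} (hl : h l = none) (o : F → V) :
    SEPre ft k h (Function.update h l (some o)) := by
  refine ⟨fun x hx => ?_, fun x o₁ o₂ h₁ h₂ _ _ => ?_⟩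
  · exact isSome_update_some_of_isSome hx l _
  · have hxl : x ≠ l := by rintro rfl; simp [hl] at h₁
    rw [Function.update_of_ne hxl, h₁] at h₂
    exact congrFun (Option.some.inj h₂) _

theorem update_field [DecidableEq L] [DecidableEq F] {h : Heap L F V} {l : L} {o : F → V}
    (hl : h l = some o) {f : F} (hf : k ≤ ft f) (v : V) :
    SEPre ft k h (Function.update h l (some (Function.update o f v))) := by
  refine ⟨fun x hx => ?_, fun x o₁ o₂ h₁ h₂ g hg => ?_⟩
  · exact isSome_update_some_of_isSome hx l _
  · rcases eq_or_ne x l with rfl | hxl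
    · obtain rfl : o₁ = o := Option.some.inj (h₁.symm.trans hl)
      obtain rfl : Function.update o₁ f v = o₂ := by simpa using h₂
      have hgf : g ≠ f := by rintro rfl; exact hg hf
      exact (Function.update_of_ne hgf v o₁).symm
    · rw [Function.update_of_ne hxl, h₁] at h₂
      exact congrFun (Option.some.inj h₂) _

end SEPre

/-- side-effect safety of typable non-invoke DEX steps. -/
theorem stmt10 {L F V Sec : Type*} [Lattice Sec] [DecidableEq L] [DecidableEq F]
    (ft : F → Sec) (kh : Sec) (ins : Instr F) (h h' : Heap L F V)
    (hnoinvoke : ins ≠ Instr.invoke)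
    (hstep : HeapEffect ins h h')
    (htyp : TypableConstraint ft kh ins) :
    SEPre ft kh h h' := by
  cases ins with
  | const | move | goto | ifeq | binop | iget => rw [hstep]; exact SEPre.refl ft kh h
  | new | newarray =>
    obtain ⟨l, o, hl, rfl⟩ := hstep
    exact SEPre.update_fresh ft kh hl o
  | iput f | aput f =>
    obtain ⟨l, o, v, hl, rfl⟩ := hstep
    exact SEPre.update_field ft kh hl htyp v
  | invoke => exact absurd rfl hnoinvoke
end

section
/- Changed register is high: under the same setting, if during an execution trace ⟨i0, ρ0⟩ ⇝ ⋯ ⇝ ⟨ik, ρk⟩ with se(i_j) ≰ k_obs for all j, the value of register r is changed by at least one instruction in the trace, then RT_{ik}(r) ≰ k_obs. -/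
/-! A step that changes the value of `r` cannot be an untouched step, so it assigns `r` a type
above the high `se` of its program point: right after the first change `RT r` is high. Every
later step either keeps the type of `r` or again raises it above a high `se`, so it stays high. -/

section TypingStep

variable {Sec V : Type*} [Preorder Sec] {kobs s t t' : Sec} {v v' : V}

theorem not_le_of_typing_step_of_not_le (hs : ¬ s ≤ kobs) (hstep : (v' = v ∧ t' = t) ∨ s ≤ t')
    (ht : ¬ t ≤ kobs) : ¬ t' ≤ kobs := by
  rcases hstep with ⟨-, rfl⟩ | hle
  · exact ht
  · exact mt hle.trans hs

theorem not_le_of_typing_step_of_ne (hs : ¬ s ≤ kobs) (hstep : (v' = v ∧ t' = t) ∨ s ≤ t')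
    (hne : v' ≠ v) : ¬ t' ≤ kobs := by
  rcases hstep with ⟨rfl, -⟩ | hle
  · exact absurd rfl hne
  · exact mt hle.trans hs

end TypingStep

/-- changed register is high.  Along a typable execution trace
of length `k` with high security environment throughout, every step either
leaves register `r` untouched (value and type) or assigns it a type at
least the current `se`; if the value of `r` changes at some step, then its
final type is high. -/
theorem stmt17 {Sec R V : Type*} [Lattice Sec]
    (kobs : Sec) (k : ℕ) (RT : ℕ → R → Sec) (ρ : ℕ → R → V)
    (sej : ℕ → Sec) (r : R)
    (hse : ∀ j ≤ k, ¬ sej j ≤ kobs)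
    (hstep : ∀ j < k,
      (ρ (j + 1) r = ρ j r ∧ RT (j + 1) r = RT j r) ∨ sej j ≤ RT (j + 1) r)
    (hchanged : ∃ j < k, ρ (j + 1) r ≠ ρ j r) :
    ¬ RT k r ≤ kobs := by
  obtain ⟨j, hj, hne⟩ := hchanged
  have hfirst : ¬ RT (j + 1) r ≤ kobs :=
    not_le_of_typing_step_of_ne (hse j hj.le) (hstep j hj) hne
  have hstays : ∀ m, j + 1 ≤ m → m ≤ k → ¬ RT m r ≤ kobs := by
    refine Nat.le_induction (fun _ => hfirst) fun m _ ih hm => ?_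
    exact not_le_of_typing_step_of_not_le (hse m (by omega)) (hstep m hm) (ih (by omega))
  exact hstays k hj le_rfl
end
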